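/- If D is a bipartite digraph, then ndi(D) ≤ Δ*(D) + 2. -/

import Mathlib

/-
Arcs `u → v` of `D` are the edges `u⁺v⁻` of the bipartite split graph, so König's edge-colouring
theorem (proved with Kempe chains) gives a proper arc-colouring `γ` with `k = Δ*(D)` colours.
Choose a maximal set `F` of non-distinguished arcs no two of which share a tail or a head, and
recolour each arc of `F` with `k` or `k + 1` according to the side of its tail. An end of an arc
of `F` then sees a new colour that no neighbour, lying on the other side, can see; an arc with no
end on `F` keeps its colour sets, and was distinguished already, by maximality of `F`.
-/

open Finset

section Defs

variable {V : Type*}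

/-- A (proper) arc-colouring: arcs sharing a tail, or sharing a head, get distinct colours. -/
def ProperArc (A : V → V → Prop) (γ : V → V → ℕ) : Prop :=
  (∀ u v w, A u v → A u w → v ≠ w → γ u v ≠ γ u w) ∧
  (∀ u v w, A u v → A w v → u ≠ w → γ u v ≠ γ w v)

/-- Colours appearing on outgoing arcs of `u`. -/
def outColors (A : V → V → Prop) (γ : V → V → ℕ) (u : V) : Set ℕ :=
  {c | ∃ v, A u v ∧ γ u v = c}

/-- Colours appearing on incoming arcs of `u`. -/
def inColors (A : V → V → Prop) (γ : V → V → ℕ) (u : V) : Set ℕ :=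
  {c | ∃ v, A v u ∧ γ v u = c}

/-- `u` and `v` are distinguished by `γ`. -/
def Distinguished (A : V → V → Prop) (γ : V → V → ℕ) (u v : V) : Prop :=
  (outColors A γ u, inColors A γ u) ≠ (outColors A γ v, inColors A γ v)

/-- Neighbour-distinguishing arc-colouring. -/
def NDArc (A : V → V → Prop) (γ : V → V → ℕ) : Prop :=
  ∀ u v, A u v → Distinguished A γ u v

/-- `D` has a neighbour-distinguishing proper arc-colouring with `k` colours. -/
def HasNDColoring (A : V → V → Prop) (k : ℕ) : Prop :=
  ∃ γ : V → V → ℕ, (∀ u v, A u v → γ u v < k) ∧ ProperArc A γ ∧ NDArc A γ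

/-- `D` has a proper arc-colouring with `k` colours. -/
def HasProperColoring (A : V → V → Prop) (k : ℕ) : Prop :=
  ∃ γ : V → V → ℕ, (∀ u v, A u v → γ u v < k) ∧ ProperArc A γ

/-- Outdegree of `u`. -/
def outDeg [Fintype V] (A : V → V → Prop) [DecidableRel A] (u : V) : ℕ :=
  (Finset.univ.filter fun v => A u v).card

/-- Indegree of `u`. -/
def inDeg [Fintype V] (A : V → V → Prop) [DecidableRel A] (u : V) : ℕ :=
  (Finset.univ.filter fun v => A v u).card

/-- Δ*(D) = max{Δ⁺(D), Δ⁻(D)}. -/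
def maxDeg [Fintype V] (A : V → V → Prop) [DecidableRel A] : ℕ :=
  max (Finset.univ.sup (outDeg A)) (Finset.univ.sup (inDeg A))

end Defs

lemma Equiv.swap_ite_ne {α : Type*} [DecidableEq α] {a b x y : α} {P Q : Prop}
    [Decidable P] [Decidable Q] (hxy : x ≠ y) (hPQ : (x = a ∨ x = b) → (y = a ∨ y = b) → (P ↔ Q)) :
    (if P then swap a b x else x) ≠ (if Q then swap a b y else y) := by
  by_cases hx : x = a ∨ x = b <;> by_cases hy : y = a ∨ y = b
  · rw [if_congr (hPQ hx hy) rfl rfl]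
    split_ifs <;> simpa using hxy
  all_goals split_ifs <;> simp only [not_or] at hx hy <;> aesop (add norm swap_apply_def)

section Kempe

variable {V : Type*} {R : V → V → Prop} {γ : V → V → ℕ} {a b : ℕ}

open Sum SimpleGraph

/-- The split graph has a tail copy `inl u` and a head copy `inr v` of every vertex, and the arc
`u → v` becomes the edge `inl u — inr v`. The Kempe chain of colours `a, b` is oriented: an
`a`-arc from its tail copy, a `b`-arc from its head copy. -/
def kempeRel (R : V → V → Prop) (γ : V → V → ℕ) (a b : ℕ) : V ⊕ V → V ⊕ V → Prop
  | inl u, inr v => R u v ∧ γ u v = a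
  | inr v, inl u => R u v ∧ γ u v = b
  | _, _ => False

abbrev kempeGraph (R : V → V → Prop) (γ : V → V → ℕ) (a b : ℕ) : SimpleGraph (V ⊕ V) :=
  fromRel (kempeRel R γ a b)

lemma kempeGraph_adj_of_eq_or_eq {u v : V} (h : R u v) (hc : γ u v = a ∨ γ u v = b) :
    (kempeGraph R γ a b).Adj (inl u) (inr v) := by
  rcases hc with hc | hc
  · exact (fromRel_adj _ _ _).2 ⟨inl_ne_inr, Or.inl ⟨h, hc⟩⟩
  · exact (fromRel_adj _ _ _).2 ⟨inl_ne_inr, Or.inr ⟨h, hc⟩⟩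

lemma ProperArc.kempeRel_unique (hγ : ProperArc R γ) {p q q' : V ⊕ V}
    (h : kempeRel R γ a b p q) (h' : kempeRel R γ a b p q') : q = q' := by
  rcases p with u | v <;> rcases q with _ | t <;> rcases q' with _ | t' <;>
    simp only [kempeRel] at h h' <;> by_contra hne
  · exact hγ.1 u t t' h.1 h'.1 (by simpa using hne) (h.2.trans h'.2.symm)
  · exact hγ.2 _ v _ h.1 h'.1 (by simpa using hne) (h.2.trans h'.2.symm)

lemma ProperArc.kempeRel_of_isPath (hγ : ProperArc R γ) {v w t : V ⊕ V}
    (ht : ∀ q, ¬ kempeRel R γ a b t q) (p : (kempeGraph R γ a b).Walk w t)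
    (h : (kempeGraph R γ a b).Adj v w) (hp : (Walk.cons h p).IsPath) : kempeRel R γ a b v w := by
  induction p generalizing v with
  | nil => exact ((fromRel_adj _ _ _).1 h).2.resolve_right (ht v)
  | @cons w w₂ _ h₂ p ih =>
    refine ((fromRel_adj _ _ _).1 h).2.resolve_right fun hwv => ?_
    have hv : v = w₂ := hγ.kempeRel_unique hwv (ih ht h₂ hp.of_cons)
    exact ((Walk.cons_isPath_iff _ _).1 hp).2 (by simp [hv])

lemma ProperArc.not_reachable_kempeGraph (hγ : ProperArc R γ) {x y : V}
    (ha : ∀ v, R x v → γ x v ≠ a) (hb : ∀ u, R u y → γ u y ≠ b) :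
    ¬ (kempeGraph R γ a b).Reachable (inl x) (inr y) := by
  classical
  rintro ⟨p⟩
  obtain ⟨p, hp⟩ := p.toPath
  cases p with
  | @cons _ w _ h q =>
    have hy : ∀ q, ¬ kempeRel R γ a b (inr y) q := by
      rintro (u | _) h
      exacts [hb u h.1 h.2, h]
    have hrel := hγ.kempeRel_of_isPath hy q h hp
    rcases w with _ | v
    exacts [hrel, ha v hrel.1 hrel.2]

lemma ProperArc.exists_kempe_swap (hγ : ProperArc R γ) {x y : V} (ha : ∀ v, R x v → γ x v ≠ a)
    (hb : ∀ u, R u y → γ u y ≠ b) {k : ℕ} (hk : ∀ u v, R u v → γ u v < k) (hak : a < k)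
    (hbk : b < k) :
    ∃ γ' : V → V → ℕ, (∀ u v, R u v → γ' u v < k) ∧ ProperArc R γ' ∧
      (∀ v, R x v → γ' x v ≠ a) ∧ (∀ u, R u y → γ' u y ≠ a) := by
  classical
  set G := kempeGraph R γ a b
  refine ⟨fun u v => if G.Reachable (inr y) (inr v) then Equiv.swap a b (γ u v) else γ u v,
    fun u v h => ?_, ⟨fun u v w hv hw hvw => ?_, fun u v w hu hw huw => ?_⟩, fun v hv => ?_,
    fun u hu => ?_⟩
  · dsimp only
    split_ifs
    · rw [Equiv.swap_apply_def]
      split_ifs <;> [exact hbk; exact hak; exact hk u v h]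
    · exact hk u v h
  · refine Equiv.swap_ite_ne (hγ.1 u v w hv hw hvw) fun hcv hcw => ?_
    have hvw : G.Reachable (inr v) (inr w) :=
      (kempeGraph_adj_of_eq_or_eq hv hcv).symm.reachable.trans
        (kempeGraph_adj_of_eq_or_eq hw hcw).reachable
    exact ⟨fun h => h.trans hvw, fun h => h.trans hvw.symm⟩
  · exact Equiv.swap_ite_ne (hγ.2 u v w hu hw huw) fun _ _ => Iff.rfl
  · dsimp only
    split_ifs with hr
    · rw [Ne, Equiv.swap_apply_eq_iff, Equiv.swap_apply_left]
      intro hvb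
      exact hγ.not_reachable_kempeGraph ha hb
        ((kempeGraph_adj_of_eq_or_eq hv (Or.inr hvb)).reachable.trans hr.symm)
    · exact ha v hv
  · dsimp only
    rw [if_pos (Reachable.refl _), Ne, Equiv.swap_apply_eq_iff, Equiv.swap_apply_left]
    exact hb u hu

end Kempe

section Konig

variable {V : Type*} [DecidableEq V] {R : V → V → Prop} {γ : V → V → ℕ} {a : ℕ}

lemma ProperArc.insert (hγ : ProperArc R γ) {x y : V} (hx : ∀ v, R x v → γ x v ≠ a)
    (hy : ∀ u, R u y → γ u y ≠ a) :
    ProperArc (fun u v => (u = x ∧ v = y) ∨ R u v)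
      (fun u v => if u = x ∧ v = y then a else γ u v) := by
  constructor
  · intro u v w hv hw hvw
    dsimp only at hv hw ⊢
    split_ifs with h₁ h₂ h₂
    · exact absurd (h₁.2.trans h₂.2.symm) hvw
    · obtain ⟨rfl, rfl⟩ := h₁
      exact (hx w (hw.resolve_left h₂)).symm
    · obtain ⟨rfl, rfl⟩ := h₂
      exact hx v (hv.resolve_left h₁)
    · exact hγ.1 u v w (hv.resolve_left h₁) (hw.resolve_left h₂) hvw
  · intro u v w hu hw huw
    dsimp only at hu hw ⊢
    split_ifs with h₁ h₂ h₂
    · exact absurd (h₁.1.trans h₂.1.symm) huw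
    · obtain ⟨rfl, rfl⟩ := h₁
      exact (hy w (hw.resolve_left h₂)).symm
    · obtain ⟨rfl, rfl⟩ := h₂
      exact hy u (hu.resolve_left h₁)
    · exact hγ.2 u v w (hu.resolve_left h₁) (hw.resolve_left h₂) huw

lemma Finset.exists_lt_forall_ne_of_card_lt {α : Type*} {S : Finset α} (f : α → ℕ) {k : ℕ}
    (h : #S < k) : ∃ c < k, ∀ e ∈ S, f e ≠ c := by
  classical
  obtain ⟨c, hc, hcS⟩ := exists_mem_notMem_of_card_lt_card (s := S.image f) (t := range k)
    (card_image_le.trans_lt (by simpa using h))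
  exact ⟨c, mem_range.1 hc, fun e he hec => hcS (mem_image.2 ⟨e, he, hec⟩)⟩

/-- König's edge-colouring theorem for the split graph. -/
theorem hasProperColoring_of_card_filter_le (k : ℕ) (E : Finset (V × V))
    (hout : ∀ u, #{e ∈ E | e.1 = u} ≤ k) (hin : ∀ v, #{e ∈ E | e.2 = v} ≤ k) :
    HasProperColoring (fun u v => (u, v) ∈ E) k := by
  induction E using Finset.induction_on with
  | empty => exact ⟨fun _ _ => 0, by simp, by simp [ProperArc]⟩
  | @insert e E he ih =>
    obtain ⟨x, y⟩ := e
    have hsub (p : V × V → Prop) [DecidablePred p] :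
        #{e ∈ E | p e} ≤ #{e ∈ insert (x, y) E | p e} :=
      card_le_card (filter_subset_filter p (subset_insert _ E))
    obtain ⟨γ, hk, hγ⟩ := ih (fun u => (hsub _).trans (hout u)) (fun v => (hsub _).trans (hin v))
    have hxk : #{e ∈ E | e.1 = x} < k := by
      have := hout x
      rw [filter_insert, if_pos rfl, card_insert_of_notMem fun h => he (mem_filter.1 h).1] at this
      omega
    have hyk : #{e ∈ E | e.2 = y} < k := by
      have := hin y
      rw [filter_insert, if_pos rfl, card_insert_of_notMem fun h => he (mem_filter.1 h).1] at this
      omega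
    obtain ⟨a, hak, ha⟩ := exists_lt_forall_ne_of_card_lt (fun e => γ e.1 e.2) hxk
    obtain ⟨b, hbk, hb⟩ := exists_lt_forall_ne_of_card_lt (fun e => γ e.1 e.2) hyk
    obtain ⟨γ', hk', hγ', ha', hb'⟩ :=
      hγ.exists_kempe_swap (fun v hv => ha (x, v) (mem_filter.2 ⟨hv, rfl⟩))
        (fun u hu => hb (u, y) (mem_filter.2 ⟨hu, rfl⟩)) hk hak hbk
    have hE : (fun u v => (u, v) ∈ insert (x, y) E) = fun u v => (u = x ∧ v = y) ∨ (u, v) ∈ E := by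
      ext u v
      simp
    rw [hE]
    refine ⟨_, fun u v huv => ?_, hγ'.insert ha' hb'⟩
    split_ifs with h
    exacts [hak, hk' u v (huv.resolve_left h)]

end Konig

section MaxDeg

variable {V : Type*} [Fintype V] (A : V → V → Prop) [DecidableRel A]

lemma outDeg_le_maxDeg (u : V) : outDeg A u ≤ maxDeg A :=
  (le_sup (mem_univ u)).trans (le_max_left _ _)

lemma inDeg_le_maxDeg (v : V) : inDeg A v ≤ maxDeg A :=
  (le_sup (mem_univ v)).trans (le_max_right _ _)

lemma card_filter_fst_le_outDeg [DecidableEq V] (u : V) :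
    #{e ∈ ({e | A e.1 e.2} : Finset (V × V)) | e.1 = u} ≤ outDeg A u :=
  card_le_card_of_injOn Prod.snd (fun e he => by simp at he ⊢; exact he.2 ▸ he.1)
    fun e he f hf hef => Prod.ext (by simp_all) hef

lemma card_filter_snd_le_inDeg [DecidableEq V] (v : V) :
    #{e ∈ ({e | A e.1 e.2} : Finset (V × V)) | e.2 = v} ≤ inDeg A v :=
  card_le_card_of_injOn Prod.fst (fun e he => by simp at he ⊢; exact he.2 ▸ he.1)
    fun e he f hf hef => Prod.ext hef (by simp_all)

theorem hasProperColoring_maxDeg : HasProperColoring A (maxDeg A) := by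
  classical
  simpa using hasProperColoring_of_card_filter_le (maxDeg A) {e : V × V | A e.1 e.2}
    (fun u => (card_filter_fst_le_outDeg A u).trans (outDeg_le_maxDeg A u))
    (fun v => (card_filter_snd_le_inDeg A v).trans (inDeg_le_maxDeg A v))

end MaxDeg

lemma Finset.exists_maximal_independent_subset {α : Type*} [DecidableEq α] (r : α → α → Prop)
    (hrefl : ∀ e, r e e) (hsymm : ∀ e f, r e f → r f e) (B : Finset α) :
    ∃ F ⊆ B, (F : Set α).Pairwise (fun e f => ¬ r e f) ∧ ∀ e ∈ B, ∃ f ∈ F, r e f := by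
  induction B using Finset.induction_on with
  | empty => exact ⟨∅, empty_subset _, by simp, by simp⟩
  | @insert e B _ ih =>
    obtain ⟨F, hFB, hF, hmax⟩ := ih
    by_cases he : ∃ f ∈ F, r e f
    · refine ⟨F, hFB.trans (subset_insert _ _), hF, ?_⟩
      simpa [forall_mem_insert] using ⟨he, hmax⟩
    · push Not at he
      refine ⟨insert e F, insert_subset_insert _ hFB, ?_, ?_⟩
      · rw [coe_insert, Set.pairwise_insert]
        exact ⟨hF, fun f hf _ => ⟨he f hf, fun h => he f hf (hsymm f e h)⟩⟩
      · rw [forall_mem_insert]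
        exact ⟨⟨e, mem_insert_self _ _, hrefl e⟩,
          fun e' he' => (hmax e' he').imp fun f hf => ⟨mem_insert_of_mem hf.1, hf.2⟩⟩

lemma Distinguished.symm {V : Type*} {A : V → V → Prop} {γ : V → V → ℕ} {u v : V}
    (h : Distinguished A γ u v) : Distinguished A γ v u :=
  Ne.symm h

section Repair

variable {V : Type*} {A : V → V → Prop} {s : V → Bool} {k : ℕ} {γ : V → V → ℕ}

def SharesEnd (e f : V × V) : Prop :=
  e.1 = f.1 ∨ e.2 = f.2

lemma SharesEnd.refl (e : V × V) : SharesEnd e e :=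
  Or.inl rfl

lemma SharesEnd.symm {e f : V × V} (h : SharesEnd e f) : SharesEnd f e :=
  h.imp Eq.symm Eq.symm

def mark (k : ℕ) (b : Bool) : ℕ :=
  cond b (k + 1) k

lemma mark_injective (k : ℕ) : Function.Injective (mark k) := by
  intro b b'
  cases b <;> cases b' <;> simp [mark]

lemma le_mark (k : ℕ) (b : Bool) : k ≤ mark k b := by
  cases b <;> simp [mark]

lemma mark_lt (k : ℕ) (b : Bool) : mark k b < k + 2 := by
  cases b <;> simp [mark]

variable [DecidableEq V] {F : Finset (V × V)}

def repair (s : V → Bool) (k : ℕ) (γ : V → V → ℕ) (F : Finset (V × V)) (u v : V) : ℕ :=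
  if (u, v) ∈ F then mark k (s u) else γ u v

lemma repair_eq_mark_or_lt {u v : V} (h : γ u v < k) :
    repair s k γ F u v = mark k (s u) ∨ repair s k γ F u v < k := by
  unfold repair
  split_ifs
  exacts [Or.inl rfl, Or.inr h]

lemma repair_lt {u v : V} (h : γ u v < k) : repair s k γ F u v < k + 2 := by
  rcases repair_eq_mark_or_lt (s := s) (F := F) h with h' | h'
  · exact h' ▸ mark_lt k _
  · omega

lemma properArc_repair (hγ : ProperArc A γ) (hk : ∀ u v, A u v → γ u v < k)
    (hF : (F : Set (V × V)).Pairwise fun e f => ¬ SharesEnd e f) :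
    ProperArc A (repair s k γ F) := by
  have hne {u v : V} (h : A u v) (b : Bool) : mark k b ≠ γ u v :=
    ((hk u v h).trans_le (le_mark k b)).ne'
  constructor
  · intro u v w hv hw hvw
    unfold repair
    split_ifs with h₁ h₂ h₂
    · exact (hF h₁ h₂ (by simp [hvw]) (Or.inl rfl)).elim
    exacts [hne hw _, (hne hv _).symm, hγ.1 u v w hv hw hvw]
  · intro u v w hu hw huw
    unfold repair
    split_ifs with h₁ h₂ h₂
    · exact (hF h₁ h₂ (by simp [huw]) (Or.inr rfl)).elim
    exacts [hne hw _, (hne hu _).symm, hγ.2 u v w hu hw huw]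

lemma outColors_repair {t : V} (ht : ∀ f ∈ F, f.1 ≠ t) :
    outColors A (repair s k γ F) t = outColors A γ t := by
  have : ∀ v, (t, v) ∉ F := fun v h => ht _ h rfl
  simp [outColors, repair, this]

lemma inColors_repair {t : V} (ht : ∀ f ∈ F, f.2 ≠ t) :
    inColors A (repair s k γ F) t = inColors A γ t := by
  have : ∀ u, (u, t) ∉ F := fun u h => ht _ h rfl
  simp [inColors, repair, this]

lemma distinguished_repair_of_mark_mem_outColors (hk : ∀ u v, A u v → γ u v < k) {t t' : V}
    (hst : s t ≠ s t') (h : mark k (s t) ∈ outColors A (repair s k γ F) t) :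
    Distinguished A (repair s k γ F) t t' := by
  intro heq
  obtain ⟨v, hv, hc⟩ : mark k (s t) ∈ outColors A (repair s k γ F) t' := (Prod.mk.inj heq).1 ▸ h
  rcases repair_eq_mark_or_lt (s := s) (F := F) (hk t' v hv) with h' | h'
  · exact hst (mark_injective k (hc.symm.trans h'))
  · exact (le_mark k (s t)).not_gt (hc ▸ h')

lemma distinguished_repair_of_mark_mem_inColors (hbip : ∀ u v, A u v → s u ≠ s v)
    (hk : ∀ u v, A u v → γ u v < k) {t t' w : V} (hst : s t ≠ s t') (hw : s w ≠ s t)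
    (h : mark k (s w) ∈ inColors A (repair s k γ F) t) :
    Distinguished A (repair s k γ F) t t' := by
  intro heq
  obtain ⟨u, hu, hc⟩ : mark k (s w) ∈ inColors A (repair s k γ F) t' := (Prod.mk.inj heq).2 ▸ h
  rcases repair_eq_mark_or_lt (s := s) (F := F) (hk u t' hu) with h' | h'
  · have huw : s u = s w := mark_injective k (h'.symm.trans hc)
    have hut' := hbip u t' hu
    revert hst hw huw hut'
    cases s u <;> cases s w <;> cases s t <;> cases s t' <;> simp
  · exact (le_mark k (s w)).not_gt (hc ▸ h')

lemma distinguished_repair_of_mem (hbip : ∀ u v, A u v → s u ≠ s v)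
    (hk : ∀ u v, A u v → γ u v < k) {t t' : V} (hFA : ∀ f ∈ F, A f.1 f.2) {f : V × V} (hf : f ∈ F)
    (ht : f.1 = t ∨ f.2 = t) (hst : s t ≠ s t') :
    Distinguished A (repair s k γ F) t t' := by
  rcases ht with rfl | rfl
  · exact distinguished_repair_of_mark_mem_outColors hk hst ⟨f.2, hFA f hf, by simp [repair, hf]⟩
  · exact distinguished_repair_of_mark_mem_inColors hbip hk hst (hbip _ _ (hFA f hf))
      ⟨f.1, hFA f hf, by simp [repair, hf]⟩

end Repair

theorem HasProperColoring.hasNDColoring_add_two {V : Type*} [Fintype V] {A : V → V → Prop}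
    {k : ℕ} (s : V → Bool) (hbip : ∀ u v, A u v → s u ≠ s v) (h : HasProperColoring A k) :
    HasNDColoring A (k + 2) := by
  classical
  obtain ⟨γ, hk, hγ⟩ := h
  obtain ⟨F, hFB, hF, hmax⟩ := exists_maximal_independent_subset SharesEnd SharesEnd.refl
    (fun _ _ => SharesEnd.symm) {e : V × V | A e.1 e.2 ∧ ¬ Distinguished A γ e.1 e.2}
  have hFA : ∀ f ∈ F, A f.1 f.2 := fun f hf => (mem_filter.1 (hFB hf)).2.1
  refine ⟨repair s k γ F, fun u v huv => repair_lt (hk u v huv), properArc_repair hγ hk hF,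
    fun p q hpq => ?_⟩
  by_cases hp : ∃ f ∈ F, f.1 = p ∨ f.2 = p
  · obtain ⟨f, hf, hfp⟩ := hp
    exact distinguished_repair_of_mem hbip hk hFA hf hfp (hbip p q hpq)
  by_cases hq : ∃ f ∈ F, f.1 = q ∨ f.2 = q
  · obtain ⟨f, hf, hfq⟩ := hq
    exact (distinguished_repair_of_mem hbip hk hFA hf hfq (hbip p q hpq).symm).symm
  push Not at hp hq
  have hγpq : Distinguished A γ p q := by
    by_contra hbad
    obtain ⟨f, hf, hpf | hqf⟩ := hmax (p, q) (by simp [hpq, hbad])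
    exacts [(hp f hf).1 hpf.symm, (hq f hf).2 hqf.symm]
  unfold Distinguished
  rwa [outColors_repair fun f hf => (hp f hf).1, inColors_repair fun f hf => (hp f hf).2,
    outColors_repair fun f hf => (hq f hf).1, inColors_repair fun f hf => (hq f hf).2]

theorem stmt12_general {V : Type*} [Fintype V] (A : V → V → Prop) [DecidableRel A]
    (s : V → Bool)
    (hbip : ∀ u v, A u v → s u ≠ s v) :
    HasNDColoring A (maxDeg A + 2) :=
  (hasProperColoring_maxDeg A).hasNDColoring_add_two s hbip

/-- If D is bipartite, then ndi(D) ≤ Δ*(D) + 2. -/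
theorem stmt12 {V : Type*} [Fintype V] (A : V → V → Prop) [DecidableRel A]
    (hirr : Irreflexive A) (s : V → Bool)
    (hbip : ∀ u v, A u v → s u ≠ s v) :
    HasNDColoring A (maxDeg A + 2) :=
  stmt12_general A s hbip
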